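/- arXiv:1609.01128 — 4 statements merged into one kernel-verified Lean document; each statement's English description precedes it below -/
import Mathlib

section
/- Let G be a graph, uv an edge with d_G(u) ≥ 2, and suppose v has neighbors u, w₁, ..., w_s where all wᵢ are leaves (degree 1). Let G₁ be obtained from G by deleting edges vw₁,...,vw_s and adding edges uw₁,...,uw_s. Then F(G₁) > F(G), where F(H) = Σ_{x∈V(H)} d_H(x)³. -/
open Finset
open scoped Classical

/-- The F-index of a graph: the sum of the cubes of the vertex degrees. -/
noncomputable def Findex {V : Type*} [Fintype V] (G : SimpleGraph V) : ℕ :=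
  ∑ v : V, (G.degree v) ^ 3

/-- Transformation A increases the F-index: if `uv` is an edge with `d_G(u) ≥ 2` and the
neighbors of `v` are exactly `u` together with leaves `w₁, …, w_s`, and `G₁` is obtained
from `G` by deleting the edges `v wᵢ` and adding the edges `u wᵢ`, then `F(G₁) > F(G)`. -/
theorem transformationA_increases_F {V : Type*} [Fintype V]
    (G G₁ : SimpleGraph V) (u v : V) (s : ℕ) (w : Fin s → V)
    (huv : G.Adj u v) (hdu : 2 ≤ G.degree u) (hs : 1 ≤ s)
    (hw : Function.Injective w)
    (hN : G.neighborSet v = {u} ∪ Set.range w)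
    (hleaf : ∀ i, G.degree (w i) = 1)
    (hG₁ : ∀ x y, G₁.Adj x y ↔
      (G.Adj x y ∧ ¬ ((x = v ∧ ∃ i, y = w i) ∨ (y = v ∧ ∃ i, x = w i))) ∨
      ((x = u ∧ ∃ i, y = w i) ∨ (y = u ∧ ∃ i, x = w i))) :
    Findex G < Findex G₁ := by
  classical
  have hne : u ≠ v := G.ne_of_adj huv
  -- u is not one of the w i
  have huw : ∀ i, u ≠ w i := by
    intro i h
    have := hleaf i
    rw [← h] at this
    omega
  -- v is adjacent to each w i
  have hvwadj : ∀ i, G.Adj v (w i) := by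
    intro i
    have : w i ∈ G.neighborSet v := by rw [hN]; exact Or.inr ⟨i, rfl⟩
    exact this
  have hvw : ∀ i, v ≠ w i := fun i => G.ne_of_adj (hvwadj i)
  -- the neighbor set of each leaf w i is exactly {v}
  have hAdjw : ∀ i y, G.Adj (w i) y ↔ y = v := by
    intro i y
    obtain ⟨a, ha⟩ := Finset.card_eq_one.mp (hleaf i)
    have hva : v ∈ G.neighborFinset (w i) := by
      rw [SimpleGraph.mem_neighborFinset]
      exact (hvwadj i).symm
    rw [ha, Finset.mem_singleton] at hva
    constructor
    · intro h
      have : y ∈ G.neighborFinset (w i) := by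
        rw [SimpleGraph.mem_neighborFinset]; exact h
      rw [ha, Finset.mem_singleton] at this
      rw [this, ← hva]
    · rintro rfl
      exact (hvwadj i).symm
  have hnuw : ∀ i, ¬ G.Adj u (w i) := by
    intro i h
    exact hne ((hAdjw i u).mp h.symm)
  -- Adjacency of v in G: exactly u and the w i
  have hAdjv : ∀ y, G.Adj v y ↔ y = u ∨ ∃ i, y = w i := by
    intro y
    constructor
    · intro h
      have : y ∈ G.neighborSet v := h
      rw [hN] at this
      rcases this with h1 | ⟨i, rfl⟩
      · exact Or.inl h1
      · exact Or.inr ⟨i, rfl⟩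
    · rintro (rfl | ⟨i, rfl⟩)
      · exact huv.symm
      · exact hvwadj i
  -- neighbor finsets in G
  have hnotmem : u ∉ Finset.image w Finset.univ := by
    simp only [Finset.mem_image, Finset.mem_univ, true_and]
    rintro ⟨i, hi⟩
    exact huw i hi.symm
  have hvnotmem : v ∉ Finset.image w Finset.univ := by
    simp only [Finset.mem_image, Finset.mem_univ, true_and]
    rintro ⟨i, hi⟩
    exact hvw i hi.symm
  have hcardimg : (Finset.image w Finset.univ).card = s := by
    rw [Finset.card_image_of_injective _ hw, Finset.card_univ, Fintype.card_fin]
  have hdegv : G.degree v = s + 1 := by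
    have : G.neighborFinset v = insert u (Finset.image w Finset.univ) := by
      ext y
      simp only [SimpleGraph.mem_neighborFinset, Finset.mem_insert, Finset.mem_image,
        Finset.mem_univ, true_and, hAdjv y]
      constructor
      · rintro (rfl | ⟨i, rfl⟩)
        · exact Or.inl rfl
        · exact Or.inr ⟨i, rfl⟩
      · rintro (rfl | ⟨i, rfl⟩)
        · exact Or.inl rfl
        · exact Or.inr ⟨i, rfl⟩
    rw [SimpleGraph.degree, this, Finset.card_insert_of_notMem hnotmem, hcardimg]
  -- degrees in G₁
  have hdegv1 : G₁.degree v = 1 := by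
    have : G₁.neighborFinset v = {u} := by
      ext y
      rw [SimpleGraph.mem_neighborFinset, hG₁, Finset.mem_singleton]
      constructor
      · rintro (⟨hadj, hno⟩ | ⟨⟨rfl, _⟩, _⟩ | ⟨rfl, i, hvi⟩)
        · rcases (hAdjv y).mp hadj with rfl | ⟨i, rfl⟩
          · rfl
          · exact absurd (Or.inl ⟨rfl, ⟨i, rfl⟩⟩) hno
        · exact absurd rfl hne
        · exact absurd hvi (hvw i)
      · rintro rfl
        refine Or.inl ⟨huv.symm, ?_⟩
        rintro (⟨_, i, hi⟩ | ⟨h, _⟩)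
        · exact huw i hi
        · exact hne h
    rw [SimpleGraph.degree, this, Finset.card_singleton]
  have hdegw1 : ∀ i, G₁.degree (w i) = 1 := by
    intro i
    have : G₁.neighborFinset (w i) = {u} := by
      ext y
      rw [SimpleGraph.mem_neighborFinset, hG₁, Finset.mem_singleton]
      constructor
      · rintro (⟨hadj, hno⟩ | ⟨hwu, _⟩ | ⟨rfl, _⟩)
        · have hyv := (hAdjw i y).mp hadj
          exact absurd (Or.inr ⟨hyv, ⟨i, rfl⟩⟩) hno
        · exact absurd hwu.symm (huw i)
        · rfl
      · rintro rfl
        exact Or.inr (Or.inr ⟨rfl, ⟨i, rfl⟩⟩)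
    rw [SimpleGraph.degree, this, Finset.card_singleton]
  have hdegu1 : G₁.degree u = G.degree u + s := by
    have : G₁.neighborFinset u = G.neighborFinset u ∪ Finset.image w Finset.univ := by
      ext y
      rw [SimpleGraph.mem_neighborFinset, hG₁, Finset.mem_union,
        SimpleGraph.mem_neighborFinset]
      simp only [Finset.mem_image, Finset.mem_univ, true_and]
      constructor
      · rintro (⟨hadj, _⟩ | ⟨i, rfl⟩ | ⟨_, i, hui⟩)
        · exact Or.inl hadj
        · exact Or.inr ⟨i, rfl⟩
        · exact absurd hui (huw i)
      · rintro (hadj | ⟨i, rfl⟩)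
        · refine Or.inl ⟨hadj, ?_⟩
          rintro (⟨huv', _⟩ | ⟨_, i, hui⟩)
          · exact hne huv'
          · exact huw i hui
        · exact Or.inr (Or.inl ⟨i, rfl⟩)
    have hdisj : Disjoint (G.neighborFinset u) (Finset.image w Finset.univ) := by
      rw [Finset.disjoint_left]
      intro a ha hb
      simp only [Finset.mem_image, Finset.mem_univ, true_and] at hb
      obtain ⟨i, rfl⟩ := hb
      rw [SimpleGraph.mem_neighborFinset] at ha
      exact hnuw i ha
    rw [SimpleGraph.degree, this, Finset.card_union_of_disjoint hdisj, hcardimg]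
    rfl
  have hdegother : ∀ x, x ≠ u → x ≠ v → (∀ i, x ≠ w i) → G₁.degree x = G.degree x := by
    intro x hxu hxv hxw
    have : G₁.neighborFinset x = G.neighborFinset x := by
      ext y
      rw [SimpleGraph.mem_neighborFinset, SimpleGraph.mem_neighborFinset, hG₁]
      constructor
      · rintro (⟨hadj, _⟩ | ⟨⟨rfl, _⟩, _⟩ | ⟨_, i, hxi⟩)
        · exact hadj
        · exact absurd rfl hxu
        · exact absurd hxi (hxw i)
      · intro hadj
        refine Or.inl ⟨hadj, ?_⟩
        rintro (⟨rfl, _⟩ | ⟨_, i, hxi⟩)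
        · exact hxv rfl
        · exact hxw i hxi
    rw [SimpleGraph.degree, this]
    rfl
  -- split the sums
  set T : Finset V := insert u (insert v (Finset.image w Finset.univ)) with hT
  have husub : u ∉ insert v (Finset.image w Finset.univ) := by
    simp only [Finset.mem_insert]
    rintro (rfl | h)
    · exact hne rfl
    · exact hnotmem h
  have sumT : ∀ (H : SimpleGraph V),
      ∑ x ∈ T, (H.degree x) ^ 3 =
        (H.degree u) ^ 3 + ((H.degree v) ^ 3 + ∑ i : Fin s, (H.degree (w i)) ^ 3) := by
    intro H
    rw [hT, Finset.sum_insert husub, Finset.sum_insert hvnotmem,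
      Finset.sum_image (fun a _ b _ h => hw h)]
  have split : ∀ (H : SimpleGraph V),
      Findex H = ∑ x ∈ T, (H.degree x) ^ 3 + ∑ x ∈ Tᶜ, (H.degree x) ^ 3 := by
    intro H
    rw [Findex, Finset.sum_add_sum_compl]
  have hcomplsame : ∑ x ∈ Tᶜ, (G₁.degree x) ^ 3 = ∑ x ∈ Tᶜ, (G.degree x) ^ 3 := by
    apply Finset.sum_congr rfl
    intro x hx
    simp only [hT, Finset.mem_compl, Finset.mem_insert, Finset.mem_image, Finset.mem_univ,
      true_and, not_or] at hx
    obtain ⟨hxu, hxv, hxw⟩ := hx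
    rw [hdegother x hxu hxv (fun i hi => hxw ⟨i, hi.symm⟩)]
  rw [split G, split G₁, hcomplsame, sumT G, sumT G₁, hdegv, hdegv1, hdegu1]
  have hG1sum : ∑ i : Fin s, (G₁.degree (w i)) ^ 3 = s := by
    simp [hdegw1]
  have hGsum : ∑ i : Fin s, (G.degree (w i)) ^ 3 = s := by
    simp [hleaf]
  rw [hG1sum, hGsum]
  have : (G.degree u) ^ 3 + (s + 1) ^ 3 < (G.degree u + s) ^ 3 + 1 ^ 3 := by
    nlinarith [hdu, hs, sq_nonneg (G.degree u), sq_nonneg s]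
  omega
end

section
/- Let u, v be two vertices of a graph G with s ≥ 1 leaves u₁,...,u_s attached to u and t ≥ 1 leaves v₁,...,v_t attached to v. Let G₁ be obtained by moving all leaves u₁,...,u_s from u to v, and G₂ by moving all leaves v₁,...,v_t from v to u. Then F(G₁) > F(G) or F(G₂) > F(G). -/
open Finset
open scoped Classical

lemma moveLeaves_findex {V : Type*} [Fintype V]
    (G G' : SimpleGraph V) (u v : V) (huv : u ≠ v)
    (s : ℕ)
    (a : Fin s → V) (ha : Function.Injective a)
    (hau : ∀ i, G.Adj u (a i)) (haleaf : ∀ i, G.degree (a i) = 1)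
    (hav : ∀ i, a i ≠ v)
    (hG' : ∀ x y, G'.Adj x y ↔
      (G.Adj x y ∧ ¬ ((x = u ∧ ∃ i, y = a i) ∨ (y = u ∧ ∃ i, x = a i))) ∨
      ((x = v ∧ ∃ i, y = a i) ∨ (y = v ∧ ∃ i, x = a i))) :
    s ≤ G.degree u ∧
    (Findex G' : ℤ) = (Findex G : ℤ)
      + 3 * s * ((G.degree u : ℤ) + G.degree v) * ((G.degree v : ℤ) - G.degree u + s) := by
  classical
  set A : Finset V := Finset.univ.image a with hA
  have hmemA : ∀ x, x ∈ A ↔ ∃ i, x = a i := by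
    intro x; simp [hA, eq_comm]
  have hAcard : A.card = s := by
    rw [hA, Finset.card_image_of_injective _ ha]; simp
  have hua : ∀ i, u ≠ a i := fun i => (hau i).ne
  have hNa : ∀ i, G.neighborFinset (a i) = {u} := by
    intro i
    refine (Finset.eq_of_subset_of_card_le ?_ ?_).symm
    · intro y hy
      simp only [Finset.mem_singleton] at hy
      subst hy
      simp [SimpleGraph.mem_neighborFinset, (hau i).symm]
    · rw [SimpleGraph.card_neighborFinset_eq_degree, haleaf i]
      simp
  have hadjA : ∀ i y, G.Adj (a i) y ↔ y = u := by
    intro i y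
    rw [← SimpleGraph.mem_neighborFinset, hNa i, Finset.mem_singleton]
  have hvna : ∀ i, ¬ G.Adj v (a i) := by
    intro i h
    exact huv ((hadjA i v).mp h.symm).symm
  have hAsubNu : A ⊆ G.neighborFinset u := by
    intro x hx
    obtain ⟨i, rfl⟩ := (hmemA x).mp hx
    simp [SimpleGraph.mem_neighborFinset, hau i]
  have hsle : s ≤ G.degree u := by
    rw [← hAcard, ← SimpleGraph.card_neighborFinset_eq_degree]
    exact Finset.card_le_card hAsubNu
  -- neighbor finsets in G'
  have hnu : ¬∃ i, u = a i := by rintro ⟨i, h⟩; exact hua i h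
  have hnv : ¬∃ i, v = a i := by rintro ⟨i, h⟩; exact hav i h.symm
  have hN'u : G'.neighborFinset u = G.neighborFinset u \ A := by
    ext y
    simp only [SimpleGraph.mem_neighborFinset, Finset.mem_sdiff, hG', hmemA, huv, hnu]
    tauto
  have hN'v : G'.neighborFinset v = G.neighborFinset v ∪ A := by
    ext y
    simp only [SimpleGraph.mem_neighborFinset, Finset.mem_union, hG', hmemA, huv.symm, hnv]
    tauto
  have hdisj : Disjoint (G.neighborFinset v) A := by
    rw [Finset.disjoint_left]
    intro x hx hxA
    obtain ⟨i, rfl⟩ := (hmemA x).mp hxA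
    exact hvna i (by simpa [SimpleGraph.mem_neighborFinset] using hx)
  have hN'a : ∀ i, G'.neighborFinset (a i) = {v} := by
    intro i
    ext y
    have he : ∃ i', a i = a i' := ⟨i, rfl⟩
    have hiau : ¬ (a i = u) := fun h => hua i h.symm
    simp only [SimpleGraph.mem_neighborFinset, Finset.mem_singleton, hG', hadjA, he, hiau,
      hav i, and_true, false_and, false_or, or_false]
    constructor
    · rintro (⟨rfl, h⟩ | rfl)
      · exact absurd rfl h
      · rfl
    · rintro rfl; right; rfl
  have hdegother : ∀ x, x ≠ u → x ≠ v → G'.degree x = G.degree x := by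
    intro x hxu hxv
    by_cases hxA : x ∈ A
    · obtain ⟨i, rfl⟩ := (hmemA x).mp hxA
      rw [SimpleGraph.degree, hN'a i, haleaf i, Finset.card_singleton]
    · have hnx : ¬∃ i, x = a i := fun h => hxA ((hmemA x).mpr h)
      have : G'.neighborFinset x = G.neighborFinset x := by
        ext y
        simp only [SimpleGraph.mem_neighborFinset, hG', hxu, hxv, hnx]
        tauto
      rw [SimpleGraph.degree, this, SimpleGraph.degree]
  have hdeg'u : (G'.degree u : ℤ) = (G.degree u : ℤ) - s := by
    have : G'.degree u = G.degree u - s := by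
      rw [SimpleGraph.degree, hN'u, Finset.card_sdiff_of_subset hAsubNu, hAcard,
        SimpleGraph.card_neighborFinset_eq_degree]
    rw [this]
    push_cast [Nat.cast_sub hsle]
    ring
  have hdeg'v : (G'.degree v : ℤ) = (G.degree v : ℤ) + s := by
    have : G'.degree v = G.degree v + s := by
      rw [SimpleGraph.degree, hN'v, Finset.card_union_of_disjoint hdisj, hAcard,
        SimpleGraph.card_neighborFinset_eq_degree]
    rw [this]; push_cast; ring
  refine ⟨hsle, ?_⟩
  have hcast : ∀ (H : SimpleGraph V), (Findex H : ℤ) = ∑ x : V, (H.degree x : ℤ) ^ 3 := by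
    intro H; rw [Findex]; push_cast; rfl
  have key : ∑ x : V, ((G'.degree x : ℤ) ^ 3 - (G.degree x : ℤ) ^ 3)
      = ((G'.degree u : ℤ) ^ 3 - (G.degree u : ℤ) ^ 3)
        + ((G'.degree v : ℤ) ^ 3 - (G.degree v : ℤ) ^ 3) := by
    rw [← Finset.sum_subset (Finset.subset_univ ({u, v} : Finset V))]
    · rw [Finset.sum_pair huv]
    · intro x _ hx
      simp only [Finset.mem_insert, Finset.mem_singleton, not_or] at hx
      rw [hdegother x hx.1 hx.2]; ring
  have hsum : (Findex G' : ℤ) - (Findex G : ℤ)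
      = ((G'.degree u : ℤ) ^ 3 - (G.degree u : ℤ) ^ 3)
        + ((G'.degree v : ℤ) ^ 3 - (G.degree v : ℤ) ^ 3) := by
    rw [hcast G', hcast G, ← Finset.sum_sub_distrib, key]
  rw [hdeg'u, hdeg'v] at hsum
  linear_combination hsum

/-- Transformation B: if `s ≥ 1` leaves `a₁, …, a_s` are attached to `u` and `t ≥ 1` leaves
`b₁, …, b_t` are attached to `v`, `G₁` is obtained by moving all the leaves `aᵢ` from `u`
to `v`, and `G₂` is obtained by moving all the leaves `bⱼ` from `v` to `u`, then
`F(G₁) > F(G)` or `F(G₂) > F(G)`. -/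
theorem transformationB_increases_F {V : Type*} [Fintype V]
    (G G₁ G₂ : SimpleGraph V) (u v : V) (huv : u ≠ v)
    (s t : ℕ) (hs : 1 ≤ s) (ht : 1 ≤ t)
    (a : Fin s → V) (b : Fin t → V)
    (ha : Function.Injective a) (hb : Function.Injective b)
    (hab : ∀ i j, a i ≠ b j)
    (hau : ∀ i, G.Adj u (a i)) (haleaf : ∀ i, G.degree (a i) = 1)
    (hav : ∀ i, a i ≠ v)
    (hbv : ∀ j, G.Adj v (b j)) (hbleaf : ∀ j, G.degree (b j) = 1)
    (hbu : ∀ j, b j ≠ u)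
    (hG₁ : ∀ x y, G₁.Adj x y ↔
      (G.Adj x y ∧ ¬ ((x = u ∧ ∃ i, y = a i) ∨ (y = u ∧ ∃ i, x = a i))) ∨
      ((x = v ∧ ∃ i, y = a i) ∨ (y = v ∧ ∃ i, x = a i)))
    (hG₂ : ∀ x y, G₂.Adj x y ↔
      (G.Adj x y ∧ ¬ ((x = v ∧ ∃ j, y = b j) ∨ (y = v ∧ ∃ j, x = b j))) ∨
      ((x = u ∧ ∃ j, y = b j) ∨ (y = u ∧ ∃ j, x = b j))) :
    Findex G < Findex G₁ ∨ Findex G < Findex G₂ := by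
  obtain ⟨hsu, h1⟩ := moveLeaves_findex G G₁ u v huv s a ha hau haleaf hav hG₁
  obtain ⟨htv, h2⟩ := moveLeaves_findex G G₂ v u huv.symm t b hb hbv hbleaf hbu hG₂
  set D : ℤ := (G.degree u : ℤ) with hD
  set E : ℤ := (G.degree v : ℤ) with hE
  have hsD : (s : ℤ) ≤ D := by rw [hD]; exact_mod_cast hsu
  have htE : (t : ℤ) ≤ E := by rw [hE]; exact_mod_cast htv
  have hs1 : (1 : ℤ) ≤ s := by exact_mod_cast hs
  have ht1 : (1 : ℤ) ≤ t := by exact_mod_cast ht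
  by_cases hc : 0 < E - D + s
  · left
    have hpos : 0 < 3 * (s : ℤ) * (D + E) * (E - D + s) := by
      have h3s : (0 : ℤ) < 3 * s := by linarith
      have hDE : (0 : ℤ) < D + E := by linarith
      exact mul_pos (mul_pos h3s hDE) hc
    have : (Findex G : ℤ) < (Findex G₁ : ℤ) := by rw [h1]; linarith
    exact_mod_cast this
  · right
    push_neg at hc
    have hc2 : 0 < D - E + t := by linarith
    have hpos : 0 < 3 * (t : ℤ) * (E + D) * (D - E + t) := by
      have h3t : (0 : ℤ) < 3 * t := by linarith
      have hDE : (0 : ℤ) < E + D := by linarith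
      exact mul_pos (mul_pos h3t hDE) hc2
    have : (Findex G : ℤ) < (Findex G₂ : ℤ) := by rw [h2]; linarith
    exact_mod_cast this
end

section
/- Among all unicyclic graphs G on n vertices, the cycle C_n is the unique graph minimizing the F-index; i.e., if G is unicyclic on n vertices and G ≇ C_n, then F(G) > F(C_n) = 8n. -/
open Finset
open scoped Classical

namespace CycleAux

open SimpleGraph

variable {V : Type*} [Fintype V]

noncomputable def nxt (G : SimpleGraph V) (u v : V) : V :=
  if h : ∃ w, G.Adj v w ∧ w ≠ u then h.choose else v

lemma nxt_spec {G : SimpleGraph V} (hreg : ∀ x, G.degree x = 2) {u v : V} (h : G.Adj u v) :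
    G.Adj v (nxt G u v) ∧ nxt G u v ≠ u := by
  have hx : ∃ w, G.Adj v w ∧ w ≠ u := by
    have hu : u ∈ G.neighborFinset v := by simpa using h.symm
    have hcard : (G.neighborFinset v).card = 2 := by
      rw [card_neighborFinset_eq_degree]; exact hreg v
    have h1 : ((G.neighborFinset v).erase u).card = 1 := by
      rw [Finset.card_erase_of_mem hu, hcard]
    obtain ⟨w, hw⟩ := Finset.card_pos.mp (by omega : 0 < ((G.neighborFinset v).erase u).card)
    obtain ⟨hwne, hwmem⟩ := Finset.mem_erase.mp hw
    exact ⟨w, by simpa using hwmem, hwne⟩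
  rw [nxt, dif_pos hx]
  exact ⟨hx.choose_spec.1, hx.choose_spec.2⟩

lemma two_nbrs {G : SimpleGraph V} (hreg : ∀ x, G.degree x = 2) {v a b c : V}
    (ha : G.Adj v a) (hb : G.Adj v b) (hab : a ≠ b) (hc : G.Adj v c) : c = a ∨ c = b := by
  have hsub : ({a, b} : Finset V) ⊆ G.neighborFinset v := by
    intro x hx
    rcases Finset.mem_insert.mp hx with rfl | hx
    · simpa using ha
    · rcases Finset.mem_singleton.mp hx with rfl
      simpa using hb
  have hcard : (G.neighborFinset v).card = 2 := by
    rw [card_neighborFinset_eq_degree]; exact hreg v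
  have hle : (G.neighborFinset v).card ≤ ({a, b} : Finset V).card := by
    rw [hcard, Finset.card_pair hab]
  have heq : ({a, b} : Finset V) = G.neighborFinset v :=
    Finset.eq_of_subset_of_card_le hsub hle
  have : c ∈ ({a, b} : Finset V) := by rw [heq]; simpa using hc
  simpa using this

noncomputable def pseq (G : SimpleGraph V) (v0 v1 : V) : ℕ → V × V
  | 0 => (v0, v1)
  | (k+1) => ((pseq G v0 v1 k).2, nxt G (pseq G v0 v1 k).1 (pseq G v0 v1 k).2)

noncomputable def fs (G : SimpleGraph V) (v0 v1 : V) (k : ℕ) : V := (pseq G v0 v1 k).1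

variable {G : SimpleGraph V} {v0 v1 : V}

lemma fs_add_two (k : ℕ) :
    fs G v0 v1 (k+2) = nxt G (fs G v0 v1 k) (fs G v0 v1 (k+1)) := rfl

lemma fs_adj (hreg : ∀ x, G.degree x = 2) (h01 : G.Adj v0 v1) (k : ℕ) :
    G.Adj (fs G v0 v1 k) (fs G v0 v1 (k+1)) := by
  induction k with
  | zero => exact h01
  | succ k ih =>
    rw [fs_add_two]
    exact (nxt_spec hreg ih).1

lemma fs_ne (hreg : ∀ x, G.degree x = 2) (h01 : G.Adj v0 v1) (k : ℕ) :
    fs G v0 v1 (k+2) ≠ fs G v0 v1 k := by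
  rw [fs_add_two]
  exact (nxt_spec hreg (fs_adj hreg h01 k)).2

lemma fs_nbrs (hreg : ∀ x, G.degree x = 2) (h01 : G.Adj v0 v1) {k : ℕ} {c : V}
    (hc : G.Adj (fs G v0 v1 (k+1)) c) : c = fs G v0 v1 k ∨ c = fs G v0 v1 (k+2) :=
  two_nbrs hreg (fs_adj hreg h01 k).symm (fs_adj hreg h01 (k+1))
    (Ne.symm (fs_ne hreg h01 k)) hc

lemma fs_back (hreg : ∀ x, G.degree x = 2) (h01 : G.Adj v0 v1) {i j : ℕ}
    (h1 : fs G v0 v1 (i+1) = fs G v0 v1 (j+1)) (h2 : fs G v0 v1 (i+2) = fs G v0 v1 (j+2)) :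
    fs G v0 v1 i = fs G v0 v1 j := by
  have hadj : G.Adj (fs G v0 v1 (j+1)) (fs G v0 v1 i) := by
    rw [← h1]; exact (fs_adj hreg h01 i).symm
  rcases fs_nbrs hreg h01 hadj with h | h
  · exact h
  · exact absurd (h.trans h2.symm).symm (fs_ne hreg h01 i)

lemma fs_fwd {a b : ℕ} (h0 : fs G v0 v1 a = fs G v0 v1 b)
    (h1 : fs G v0 v1 (a+1) = fs G v0 v1 (b+1)) (k : ℕ) :
    fs G v0 v1 (a+k) = fs G v0 v1 (b+k) ∧ fs G v0 v1 (a+k+1) = fs G v0 v1 (b+k+1) := by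
  induction k with
  | zero => exact ⟨h0, h1⟩
  | succ k ih =>
    refine ⟨ih.2, ?_⟩
    have e1 : a + (k+1) + 1 = (a+k) + 2 := by omega
    have e2 : b + (k+1) + 1 = (b+k) + 2 := by omega
    rw [e1, e2, fs_add_two, fs_add_two, ih.1, ih.2]

lemma pair_zero (hreg : ∀ x, G.degree x = 2) (h01 : G.Adj v0 v1) :
    ∀ (a q : ℕ), fs G v0 v1 a = fs G v0 v1 (a+q) →
      fs G v0 v1 (a+1) = fs G v0 v1 (a+q+1) →
      fs G v0 v1 0 = fs G v0 v1 q ∧ fs G v0 v1 1 = fs G v0 v1 (q+1) := by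
  intro a
  induction a with
  | zero => intro q h0 h1; exact ⟨by simpa using h0, by simpa using h1⟩
  | succ a ih =>
    intro q h0 h1
    apply ih
    · apply fs_back hreg h01 (j := a + q)
      · simpa [Nat.add_right_comm a q 1] using h0
      · have e1 : a + 1 + 1 = a + 2 := by omega
        have e2 : a + 1 + q + 1 = a + q + 2 := by omega
        rw [← e1, ← e2]; exact h1
    · simpa [Nat.add_right_comm a q 1] using h0

lemma period_of_pair (hreg : ∀ x, G.degree x = 2) (h01 : G.Adj v0 v1) {a q : ℕ}
    (h0 : fs G v0 v1 a = fs G v0 v1 (a+q)) (h1 : fs G v0 v1 (a+1) = fs G v0 v1 (a+q+1)) :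
    ∀ k, fs G v0 v1 (k+q) = fs G v0 v1 k := by
  obtain ⟨z0, z1⟩ := pair_zero hreg h01 a q h0 h1
  intro k
  have := (fs_fwd (a := 0) (b := q) z0 (by simpa using z1) k).1
  simpa [Nat.add_comm] using this.symm

lemma exists_period (hreg : ∀ x, G.degree x = 2) (h01 : G.Adj v0 v1) :
    ∃ q, 0 < q ∧ ∀ k, fs G v0 v1 (k+q) = fs G v0 v1 k := by
  obtain ⟨x, y, hxy, hfeq⟩ := Finite.exists_ne_map_eq_of_infinite
    (fun k : ℕ => (fs G v0 v1 k, fs G v0 v1 (k+1)))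
  wlog hlt : x < y generalizing x y
  · exact this y x hxy.symm hfeq.symm (by omega)
  have h0 : fs G v0 v1 x = fs G v0 v1 (x + (y - x)) := by
    rw [show x + (y - x) = y by omega]; exact congrArg Prod.fst hfeq
  have h1 : fs G v0 v1 (x+1) = fs G v0 v1 (x + (y - x) + 1) := by
    rw [show x + (y - x) = y by omega]; exact congrArg Prod.snd hfeq
  exact ⟨y - x, by omega, period_of_pair hreg h01 h0 h1⟩


lemma iso_cycle {V : Type*} [Fintype V] {G : SimpleGraph V} {n : ℕ}
    (hn : 3 ≤ n) (hcard : Fintype.card V = n) (hconn : G.Connected)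
    (hreg : ∀ v, G.degree v = 2) : Nonempty (G ≃g SimpleGraph.cycleGraph n) := by
  obtain ⟨v0⟩ := hconn.nonempty
  obtain ⟨v1, h01⟩ := (SimpleGraph.degree_pos_iff_exists_adj G v0).mp (by rw [hreg v0]; omega)
  set f : ℕ → V := fs G v0 v1 with hf
  have hPex : ∃ q, 0 < q ∧ ∀ k, f (k+q) = f k := exists_period hreg h01
  set p : ℕ := Nat.find hPex with hpdef
  obtain ⟨hppos, hper⟩ : 0 < p ∧ ∀ k, f (k+p) = f k := Nat.find_spec hPex
  have hmin : ∀ m, m < p → ¬ (0 < m ∧ ∀ k, f (k+m) = f k) := fun m hm => Nat.find_min hPex hm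
  have hmod : ∀ k, f k = f (k % p) := by
    intro k
    induction k using Nat.strong_induction_on with
    | _ k ih =>
      by_cases h : k < p
      · rw [Nat.mod_eq_of_lt h]
      · push_neg at h
        have hk : k = (k - p) + p := by omega
        rw [Nat.mod_eq_sub_mod h, ← ih (k - p) (by omega)]
        conv_lhs => rw [hk]
        exact hper (k - p)
  have hinj : ∀ i j, i < j → j < p → f i ≠ f j := by
    intro i j hij hjp heq
    obtain ⟨j', hj'⟩ : ∃ j', j = j' + 1 := ⟨j - 1, by omega⟩
    have hadj' : G.Adj (f (j'+1)) (f (i+1)) := by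
      rw [← hj', ← heq]; exact fs_adj hreg h01 i
    rcases fs_nbrs hreg h01 hadj' with hA | hA
    · -- f (i+1) = f (j-1) : reflection case
      by_cases hji : j' = i
      · rw [hji] at hA
        exact (fs_adj hreg h01 i).ne hA.symm
      · have hA' : f (i+1) = f (j-1) := by
          rw [show j - 1 = j' by omega]; exact hA
        have hd2 : 2 ≤ j - i := by omega
        have hrefl : ∀ t, 2*t + 1 ≤ j - i →
            f (i+t) = f (j-t) ∧ f (i+t+1) = f (j-t-1) := by
          intro t
          induction t with
          | zero =>
            intro _
            exact ⟨by simpa using heq, by simpa using hA'⟩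
          | succ t ih =>
            intro ht
            obtain ⟨A, B⟩ := ih (by omega)
            constructor
            · rw [show i + (t+1) = i + t + 1 by omega, show j - (t+1) = j - t - 1 by omega]
              exact B
            · have hadj2 : G.Adj (f (j-t-1)) (f (i+t+2)) := by
                rw [← B]
                exact fs_adj hreg h01 (i+t+1)
              obtain ⟨m, hm⟩ : ∃ m, j - t - 1 = m + 1 := ⟨j - t - 2, by omega⟩
              rw [hm] at hadj2
              rcases fs_nbrs hreg h01 hadj2 with h2 | h2
              · rw [show i + (t+1) + 1 = i + t + 2 by omega,
                  show j - (t+1) - 1 = m by omega]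
                exact h2
              · exfalso
                have hm2 : m + 2 = j - t := by omega
                rw [hm2] at h2
                exact fs_ne hreg h01 (i+t) (h2.trans A.symm)
        rcases Nat.even_or_odd (j - i) with ⟨m, hm⟩ | ⟨m, hm⟩
        · have hm1 : 1 ≤ m := by omega
          obtain ⟨A, _⟩ := hrefl (m-1) (by omega)
          have hcontra : f ((i + (m-1)) + 2) = f (i + (m-1)) := by
            rw [show (i + (m-1)) + 2 = j - (m-1) by omega]
            exact A.symm
          exact fs_ne hreg h01 (i + (m-1)) hcontra
        · obtain ⟨_, B⟩ := hrefl m (by omega)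
          have hcontra : f (i + m + 1) = f (i + m) := by
            rw [B, show j - m - 1 = i + m by omega]
          exact (fs_adj hreg h01 (i+m)).ne hcontra.symm
    · -- f (i+1) = f (j+1) : smaller period
      have hq0 : f i = f (i + (j - i)) := by
        rw [show i + (j - i) = j by omega]; exact heq
      have hq1 : f (i+1) = f (i + (j - i) + 1) := by
        rw [show i + (j - i) + 1 = j' + 2 by omega]; exact hA
      exact hmin (j - i) (by omega) ⟨by omega, period_of_pair hreg h01 hq0 hq1⟩
  have hcl : ∀ k w, G.Adj (f k) w → ∃ m, f m = w := by
    intro k w hw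
    obtain ⟨k', hk'⟩ : ∃ k', k + p = k' + 1 := ⟨k + p - 1, by omega⟩
    have hadj : G.Adj (f (k'+1)) w := by
      rw [← hk', hper k]; exact hw
    rcases fs_nbrs hreg h01 hadj with h | h
    · exact ⟨k', h.symm⟩
    · exact ⟨k'+2, h.symm⟩
  have key : ∀ (u v : V) (w : G.Walk u v), (∃ m, f m = u) → ∃ m, f m = v := by
    intro u v w
    induction w with
    | nil => exact id
    | cons h q ih =>
      rintro ⟨m, hm⟩
      apply ih
      apply hcl m
      rw [hm]; exact h
  have hsur : ∀ v : V, ∃ k, k < p ∧ f k = v := by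
    intro v
    obtain ⟨w⟩ := hconn.preconnected (f 0) v
    obtain ⟨m, hm⟩ := key _ _ w ⟨0, rfl⟩
    exact ⟨m % p, Nat.mod_lt _ hppos, by rw [← hmod m]; exact hm⟩
  have hbij0 : Function.Bijective (fun i : Fin p => f i.val) := by
    constructor
    · intro a b hab
      rcases lt_trichotomy a.val b.val with h | h | h
      · exact absurd hab (hinj _ _ h b.isLt)
      · exact Fin.ext h
      · exact absurd hab.symm (hinj _ _ h a.isLt)
    · intro v
      obtain ⟨k, hk, hfk⟩ := hsur v
      exact ⟨⟨k, hk⟩, hfk⟩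
  have hpn : p = n := by
    have := Fintype.card_of_bijective hbij0
    rw [Fintype.card_fin, hcard] at this
    exact this
  have hinj' : ∀ a b : ℕ, f a = f b → a % p = b % p := by
    intro a b hab
    rcases lt_trichotomy (a % p) (b % p) with h | h | h
    · exact absurd ((hmod a).symm.trans (hab.trans (hmod b)))
        (hinj _ _ h (Nat.mod_lt _ hppos))
    · exact h
    · exact absurd ((hmod b).symm.trans (hab.symm.trans (hmod a)))
        (hinj _ _ h (Nat.mod_lt _ hppos))
  rw [hpn] at hinj' hmod hppos
  have hbij : Function.Bijective (fun i : Fin n => f i.val) := by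
    rw [← hpn]; exact hbij0
  haveI : NeZero n := ⟨by omega⟩
  set e : Fin n ≃ V := Equiv.ofBijective _ hbij with he
  have hev : ∀ i : Fin n, e i = f i.val := fun i => rfl
  have hone : (1 : Fin n).val = 1 := by
    rw [Fin.val_one']; exact Nat.mod_eq_of_lt (by omega)
  have hstep : ∀ u : Fin n, e (u + 1) = f (u.val + 1) := by
    intro u
    rw [hev]
    have hv : ((u + 1 : Fin n)).val = (u.val + 1) % n := by
      rw [Fin.val_add, hone]
    rw [hv, ← hmod]
  have hmain : ∀ a b : Fin n, G.Adj (e a) (e b) ↔ (SimpleGraph.cycleGraph n).Adj a b := by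
    intro u v
    constructor
    · intro hadj
      rw [hev, hev] at hadj
      set m : ℕ := u.val + n - 1 with hmdef
      have hm1 : m + 1 = u.val + n := by omega
      have hum : f u.val = f (m + 1) := by
        rw [hm1, hmod (u.val + n)]
        have hmm : (u.val + n) % n = u.val := by
          rw [Nat.add_mod_right]; exact Nat.mod_eq_of_lt u.isLt
        rw [hmm]
      rw [hum] at hadj
      rcases fs_nbrs hreg h01 hadj with h | h
      · have hmodeq : v.val % n = m % n := hinj' _ _ h
        have huv : u = v + 1 := by
          apply Fin.ext
          rw [Fin.val_add, hone]
          rw [Nat.mod_eq_of_lt v.isLt] at hmodeq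
          rw [hmodeq, Nat.mod_add_mod, show m + 1 = u.val + n by omega,
            Nat.add_mod_right, Nat.mod_eq_of_lt u.isLt]
        have hone' : u - v = 1 := by rw [huv]; exact add_sub_cancel_left v 1
        rw [SimpleGraph.cycleGraph_adj']
        left; rw [hone', hone]
      · have hmodeq : v.val % n = (m + 2) % n := hinj' _ _ h
        have hvu : v = u + 1 := by
          apply Fin.ext
          rw [Fin.val_add, hone]
          rw [Nat.mod_eq_of_lt v.isLt] at hmodeq
          rw [hmodeq, show m + 2 = (u.val + 1) + n by omega, Nat.add_mod_right]
        have hone' : v - u = 1 := by rw [hvu]; exact add_sub_cancel_left u 1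
        rw [SimpleGraph.cycleGraph_adj']
        right; rw [hone', hone]
    · intro hadj
      rw [SimpleGraph.cycleGraph_adj'] at hadj
      rcases hadj with h | h
      · have huv : u = v + 1 := by
          have hx : v + (u - v) = u := by
            rw [add_comm]; exact sub_add_cancel u v
          rw [← hx]
          congr 1
          apply Fin.ext
          rw [h, hone]
        rw [huv, hstep, hev]
        exact (fs_adj hreg h01 v.val).symm
      · have hvu : v = u + 1 := by
          have hx : u + (v - u) = v := by
            rw [add_comm]; exact sub_add_cancel v u
          rw [← hx]
          congr 1
          apply Fin.ext
          rw [h, hone]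
        rw [hvu, hstep, hev]
        exact fs_adj hreg h01 u.val
  exact ⟨(SimpleGraph.Iso.symm ⟨e, fun {a b} => hmain a b⟩ : G ≃g SimpleGraph.cycleGraph n)⟩

end CycleAux

/-- Among all unicyclic graphs (connected graphs with as many edges as vertices) on `n ≥ 3`
vertices, the cycle `C_n` is the unique graph minimizing the F-index: `F(C_n) = 8n`, and any
unicyclic graph `G` on `n` vertices not isomorphic to `C_n` satisfies `F(G) > 8n`. -/
theorem cycle_unique_min_Findex {V : Type*} [Fintype V] (n : ℕ)
    (hn : 3 ≤ n) (hcard : Fintype.card V = n)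
    (G : SimpleGraph V) (hconn : G.Connected)
    (huni : G.edgeFinset.card = n)
    (hniso : ¬ Nonempty (G ≃g SimpleGraph.cycleGraph n)) :
    Findex (SimpleGraph.cycleGraph n) = 8 * n ∧ 8 * n < Findex G := by
  have hC : Findex (SimpleGraph.cycleGraph n) = 8 * n := by
    obtain ⟨m, rfl⟩ : ∃ m, n = m + 3 := ⟨n - 3, by omega⟩
    have hsum8 : Findex (SimpleGraph.cycleGraph (m+3)) = ∑ _v : Fin (m+3), 8 := by
      unfold Findex
      refine Finset.sum_congr rfl fun v _ => ?_
      have hdeg2 : ∀ (inst : Fintype ((SimpleGraph.cycleGraph (m+3)).neighborSet v)),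
          @SimpleGraph.degree _ (SimpleGraph.cycleGraph (m+3)) v inst = 2 := by
        intro inst
        convert SimpleGraph.cycleGraph_degree_three_le (n := m) (v := v) using 2
      rw [hdeg2]
      norm_num
    rw [hsum8, Finset.sum_const, Finset.card_univ, Fintype.card_fin, smul_eq_mul]
    ring
  refine ⟨hC, ?_⟩
  have hsum : ∑ v : V, G.degree v = 2 * n := by
    rw [SimpleGraph.sum_degrees_eq_twice_card_edges, huni]
  have hkey : ∀ d : ℕ, 12 * d ≤ d^3 + 16 ∧ (d ≠ 2 → 12 * d < d^3 + 16) := by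
    intro d
    rcases le_or_gt d 4 with h | h
    · interval_cases d <;> exact ⟨by decide, by decide⟩
    · have h25 : 25 ≤ d * d := Nat.mul_le_mul h h
      have hlt : 12 * d < d^3 + 16 := by
        calc 12 * d < 25 * d := by omega
          _ ≤ d * d * d := Nat.mul_le_mul_right d h25
          _ = d ^ 3 := by ring
          _ ≤ d ^ 3 + 16 := Nat.le_add_right _ _
      exact ⟨le_of_lt hlt, fun _ => hlt⟩
  have hne : ∃ v, G.degree v ≠ 2 := by
    by_contra hall
    push_neg at hall
    exact hniso (CycleAux.iso_cycle hn hcard hconn hall)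
  have hlt : ∑ v : V, 12 * G.degree v < ∑ v : V, (G.degree v ^ 3 + 16) := by
    obtain ⟨w, hw⟩ := hne
    exact Finset.sum_lt_sum (fun i _ => (hkey _).1) ⟨w, Finset.mem_univ w, (hkey _).2 hw⟩
  have h1 : ∑ v : V, 12 * G.degree v = 24 * n := by
    rw [← Finset.mul_sum, hsum]; ring
  have h2 : ∑ v : V, (G.degree v ^ 3 + 16) = Findex G + 16 * n := by
    rw [Finset.sum_add_distrib, Finset.sum_const, Finset.card_univ, hcard, smul_eq_mul]
    unfold Findex
    ring
  rw [h1, h2] at hlt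
  omega
end

section
/- Let G be a unicyclic graph on n vertices with unique cycle C = u₁u₂...u_k u₁, k < n, and suppose d(u₁) ≥ 3. Let P[u₁, v₁] be a maximal path starting at u₁ going outside the cycle, ending at a leaf v₁. Let G' = G − u₁u₂ + u₂v₁. Then F(G) − F(G') = 3(d(u₁) + d(v₁))(d(u₁) − d(v₁) − 1) > 0, i.e., F(G) > F(G'). -/
open Finset
open scoped Classical

/-- Let `G` be a unicyclic graph (connected, with as many edges as vertices) whose unique
cycle contains the adjacent vertices `u₁, u₂` with `d(u₁) ≥ 3`, and let `v₁` be the leaf at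
the end of a maximal path leaving the cycle at `u₁` (so `d(v₁) = 1`, `v₁ ≠ u₂` and `v₁` is
not adjacent to `u₂`).  If `G' = G − u₁u₂ + u₂v₁`, i.e. `G'` agrees with `G` except that the
edge `u₁u₂` is deleted and the edge `u₂v₁` is added, then
`F(G) − F(G') = 3(d(u₁) + d(v₁))(d(u₁) − d(v₁) − 1) > 0`, so `F(G) > F(G')`. -/
theorem edge_switch_decreases_F {V : Type*} [Fintype V]
    (G G' : SimpleGraph V) (u₁ u₂ v₁ : V)
    (hconn : G.Connected) (huni : G.edgeFinset.card = Fintype.card V)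
    (h12 : G.Adj u₁ u₂) (hd1 : 3 ≤ G.degree u₁)
    (hleaf : G.degree v₁ = 1) (hne : v₁ ≠ u₂) (hnadj : ¬ G.Adj u₂ v₁)
    (hG' : ∀ x y, G'.Adj x y ↔
      (G.Adj x y ∧ ¬ ((x = u₁ ∧ y = u₂) ∨ (x = u₂ ∧ y = u₁))) ∨
      ((x = u₂ ∧ y = v₁) ∨ (x = v₁ ∧ y = u₂))) :
    (Findex G : ℤ) - Findex G' =
      3 * ((G.degree u₁ : ℤ) + G.degree v₁) * ((G.degree u₁ : ℤ) - G.degree v₁ - 1) ∧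
    Findex G' < Findex G := by
  have hu12 : u₁ ≠ u₂ := G.ne_of_adj h12
  have hu1v1 : u₁ ≠ v₁ := by
    rintro rfl; rw [hleaf] at hd1; omega
  -- degree of u₁ in G'
  have hNu1 : G'.neighborFinset u₁ = G.neighborFinset u₁ \ {u₂} := by
    ext y
    rw [SimpleGraph.mem_neighborFinset, hG']
    simp only [mem_sdiff, mem_singleton, SimpleGraph.mem_neighborFinset]
    constructor
    · rintro (⟨h, hn⟩ | ⟨h1, h2⟩ | ⟨h1, h2⟩)
      · exact ⟨h, fun hy => hn (by simp [hy])⟩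
      · exact absurd h1 hu12
      · exact absurd h1 hu1v1
    · rintro ⟨h, hy⟩
      exact Or.inl ⟨h, by rintro (⟨h1, h2⟩ | ⟨h1, h2⟩) <;> simp_all⟩
  have hdu1 : G'.degree u₁ = G.degree u₁ - 1 := by
    rw [SimpleGraph.degree, hNu1, card_sdiff_of_subset (by
      simp [singleton_subset_iff, SimpleGraph.mem_neighborFinset, h12])]
    rfl
  -- degree of v₁ in G'
  have hNv1 : G'.neighborFinset v₁ = G.neighborFinset v₁ ∪ {u₂} := by
    ext y
    rw [SimpleGraph.mem_neighborFinset, hG']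
    simp only [mem_union, mem_singleton, SimpleGraph.mem_neighborFinset]
    constructor
    · rintro (⟨h, hn⟩ | ⟨h1, h2⟩ | ⟨h1, h2⟩)
      · exact Or.inl h
      · exact absurd h1.symm hne.symm
      · exact Or.inr h2
    · rintro (h | rfl)
      · refine Or.inl ⟨h, ?_⟩
        rintro (⟨rfl, _⟩ | ⟨rfl, _⟩)
        · exact hu1v1 rfl
        · exact hne rfl
      · exact Or.inr (by simp)
  have hdv1 : G'.degree v₁ = 2 := by
    rw [SimpleGraph.degree, hNv1, card_union_of_disjoint (by
      simp only [disjoint_singleton_right, SimpleGraph.mem_neighborFinset]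
      exact fun h => hnadj h.symm)]
    have hc : (G.neighborFinset v₁).card = G.degree v₁ := rfl
    simp only [card_singleton]
    omega
  -- degree elsewhere
  have hdother : ∀ x, x ≠ u₁ → x ≠ v₁ → G'.degree x = G.degree x := by
    intro x hx1 hxv
    by_cases hx2 : x = u₂
    · subst hx2
      have hN : G'.neighborFinset x = (G.neighborFinset x \ {u₁}) ∪ {v₁} := by
        ext y
        rw [SimpleGraph.mem_neighborFinset, hG']
        simp only [mem_union, mem_sdiff, mem_singleton, SimpleGraph.mem_neighborFinset]
        constructor
        · rintro (⟨h, hn⟩ | ⟨h1, h2⟩ | ⟨h1, h2⟩)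
          · exact Or.inl ⟨h, fun hy => hn (by simp [hy])⟩
          · exact Or.inr h2
          · exact absurd h1.symm hne
        · rintro (⟨h, hy⟩ | rfl)
          · exact Or.inl ⟨h, by rintro (⟨h1, h2⟩ | ⟨h1, h2⟩) <;> simp_all⟩
          · exact Or.inr (by simp)
      have hu1mem : u₁ ∈ G.neighborFinset x := by
        simp [SimpleGraph.mem_neighborFinset, h12.symm]
      have hv1nmem : v₁ ∉ G.neighborFinset x \ {u₁} := by
        simp only [mem_sdiff, SimpleGraph.mem_neighborFinset]
        exact fun h => hnadj h.1
      rw [SimpleGraph.degree, hN, card_union_of_disjoint (by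
          simpa [disjoint_singleton_right] using hv1nmem),
        card_sdiff_of_subset (by simpa [singleton_subset_iff] using hu1mem)]
      have : 1 ≤ (G.neighborFinset x).card := card_pos.2 ⟨u₁, hu1mem⟩
      have hc : (G.neighborFinset x).card = G.degree x := rfl
      simp only [card_singleton]
      omega
    · have hN : G'.neighborFinset x = G.neighborFinset x := by
        ext y
        rw [SimpleGraph.mem_neighborFinset, hG']
        simp only [SimpleGraph.mem_neighborFinset]
        constructor
        · rintro (⟨h, _⟩ | ⟨h1, _⟩ | ⟨h1, _⟩)
          · exact h
          · exact absurd h1 hx2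
          · exact absurd h1 hxv
        · intro h
          exact Or.inl ⟨h, by rintro (⟨h1, h2⟩ | ⟨h1, h2⟩) <;> simp_all⟩
      rw [SimpleGraph.degree, hN]; rfl
  -- sum manipulation
  have key : (Findex G : ℤ) - Findex G' =
      ∑ v : V, (((G.degree v : ℤ)) ^ 3 - ((G'.degree v : ℤ)) ^ 3) := by
    simp [Findex, Finset.sum_sub_distrib]
  have hsum : ∑ v : V, (((G.degree v : ℤ)) ^ 3 - ((G'.degree v : ℤ)) ^ 3) =
      ∑ v ∈ ({u₁, v₁} : Finset V),
        (((G.degree v : ℤ)) ^ 3 - ((G'.degree v : ℤ)) ^ 3) := by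
    symm
    apply Finset.sum_subset (subset_univ _)
    intro x _ hx
    simp only [mem_insert, mem_singleton, not_or] at hx
    rw [hdother x hx.1 hx.2]
    ring
  have hdu1' : (G'.degree u₁ : ℤ) = (G.degree u₁ : ℤ) - 1 := by
    rw [hdu1]; push_cast [Nat.cast_sub (by omega : 1 ≤ G.degree u₁)]; ring
  have heq : (Findex G : ℤ) - Findex G' =
      3 * ((G.degree u₁ : ℤ) + G.degree v₁) * ((G.degree u₁ : ℤ) - G.degree v₁ - 1) := by
    rw [key, hsum, Finset.sum_pair hu1v1, hdu1', hdv1, hleaf]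
    push_cast
    ring
  refine ⟨heq, ?_⟩
  have h3 : (3 : ℤ) ≤ (G.degree u₁ : ℤ) := by exact_mod_cast hd1
  have : (0 : ℤ) < (Findex G : ℤ) - Findex G' := by
    rw [heq, hleaf]
    push_cast
    nlinarith
  have hlt : (Findex G' : ℤ) < Findex G := by linarith
  exact_mod_cast hlt
end
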